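/- arXiv:2308.13700 — 3 statements merged into one kernel-verified Lean document; each statement's English description precedes it below -/
import Mathlib

section
/- For any finite simple graph G on n ≥ 2 vertices, there exists a family of at most n-1 vertex subsets V₁,…,V_d ⊆ V(G) such that the edge set of G equals the symmetric difference of the edge sets of the complete graphs on the V_i (i.e., an edge {u,v} is in G iff {u,v} ⊆ V_i for an odd number of indices i). -/
/-!
Complementing `G` on the closed neighbourhood `N[a]` of a vertex `a` toggles exactly the edges
inside `N[a]`, so it deletes every edge at `a` and creates no edge outside `N[a] ⊆ supp G ∪ {a}`.
The resulting graph is therefore supported on `supp G \ {a}`, and by induction a graph supported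
on `k ≥ 1` vertices is produced by `k - 1` subgraph complementations.
-/

open Finset

namespace SimpleGraph

variable {V : Type*}

def complementOn (G : SimpleGraph V) (T : Finset V) : SimpleGraph V where
  Adj u v := u ≠ v ∧ Xor (G.Adj u v) (u ∈ T ∧ v ∈ T)
  symm := ⟨fun u v ⟨huv, hx⟩ => ⟨huv.symm, by rwa [G.adj_comm, and_comm]⟩⟩
  loopless := ⟨fun _ h => h.1 rfl⟩

@[simp]
theorem complementOn_adj {G : SimpleGraph V} {T : Finset V} {u v : V} :
    (G.complementOn T).Adj u v ↔ u ≠ v ∧ Xor (G.Adj u v) (u ∈ T ∧ v ∈ T) :=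
  Iff.rfl

theorem support_complementOn_subset (G : SimpleGraph V) (T : Finset V) :
    (G.complementOn T).support ⊆ G.support ∪ T := by
  rintro u ⟨v, -, hx | hx⟩
  · exact Or.inl ⟨v, hx.1⟩
  · exact Or.inr hx.1.1

theorem not_complementOn_adj_of_mem_iff {G : SimpleGraph V} {T : Finset V} {a : V}
    (hT : ∀ w, w ∈ T ↔ w = a ∨ G.Adj a w) (w : V) : ¬(G.complementOn T).Adj a w := by
  rintro ⟨haw, hx⟩
  have haT : a ∈ T := (hT a).2 (Or.inl rfl)
  have hwT : w ∈ T ↔ G.Adj a w := by simp [hT, Ne.symm haw]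
  simp only [haT, true_and, hwT, xor_self] at hx

theorem eq_bot_of_support_subset {G : SimpleGraph V} {A : Finset V} (hG : G.support ⊆ A)
    (hA : #A ≤ 1) : G = ⊥ := by
  ext u v
  refine iff_of_false (fun huv => ?_) id
  have : 1 < #A := one_lt_card.2 ⟨u, hG huv.mem_support_left, v, hG huv.mem_support_right, huv.ne⟩
  omega

variable [DecidableEq V]

theorem support_complementOn_subset_erase {G : SimpleGraph V} {A T : Finset V} {a : V}
    (hG : G.support ⊆ A) (hT : ∀ w, w ∈ T ↔ w = a ∨ G.Adj a w) :
    (G.complementOn T).support ⊆ A.erase a := by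
  intro w hw
  have hwa : w ≠ a := by
    rintro rfl
    obtain ⟨x, hx⟩ := hw
    exact not_complementOn_adj_of_mem_iff hT x hx
  refine mem_erase.2 ⟨hwa, ?_⟩
  rcases support_complementOn_subset G T hw with hw | hw
  · exact hG hw
  · exact hG (((hT w).1 hw).resolve_left hwa).mem_support_right

def IsComplementationSystem (G : SimpleGraph V) {d : ℕ} (S : Fin d → Finset V) : Prop :=
  ∀ u v, u ≠ v → (G.Adj u v ↔ Odd #{i | u ∈ S i ∧ v ∈ S i})

theorem isComplementationSystem_bot (S : Fin 0 → Finset V) :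
    (⊥ : SimpleGraph V).IsComplementationSystem S := by
  intro u v _
  simp

theorem IsComplementationSystem.cons {G : SimpleGraph V} {T : Finset V} {d : ℕ}
    {S : Fin d → Finset V} (hS : (G.complementOn T).IsComplementationSystem S) :
    G.IsComplementationSystem (Fin.cons T S) := by
  intro u v huv
  have hS' := hS u v huv
  rw [complementOn_adj, and_iff_right huv] at hS'
  rw [Fin.card_filter_univ_succ]
  simp only [Fin.cons_zero, Fin.cons_succ]
  split_ifs with hT <;> simp [← hS', Nat.odd_add_one, xor_iff_iff_not, hT]

theorem exists_isComplementationSystem_of_support_subset (A : Finset V) (G : SimpleGraph V)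
    (hG : G.support ⊆ A) :
    ∃ d ≤ #A - 1, ∃ S : Fin d → Finset V, G.IsComplementationSystem S := by
  induction A using Finset.strongInduction generalizing G with
  | H A ih =>
    rcases le_or_gt #A 1 with hA | hA
    · exact ⟨0, Nat.zero_le _, Fin.elim0, eq_bot_of_support_subset hG hA ▸
        isComplementationSystem_bot _⟩
    obtain ⟨a, ha⟩ := card_pos.1 (zero_lt_one.trans hA)
    classical
    set T := insert a (A.filter (G.Adj a))
    have hT : ∀ w, w ∈ T ↔ w = a ∨ G.Adj a w := fun w => by
      rw [mem_insert, mem_filter,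
        and_iff_right_of_imp fun h => mem_coe.1 (hG (h : G.Adj a w).mem_support_right)]
    obtain ⟨d, hd, S, hS⟩ :=
      ih _ (erase_ssubset ha) _ (support_complementOn_subset_erase hG hT)
    rw [card_erase_of_mem ha] at hd
    exact ⟨d + 1, by omega, Fin.cons T S, hS.cons⟩

end SimpleGraph

theorem exists_subgraph_complementation_system_general (n : ℕ)
    (G : SimpleGraph (Fin n)) :
    ∃ d : ℕ, d ≤ n - 1 ∧ ∃ S : Fin d → Finset (Fin n),
      ∀ u v : Fin n, u ≠ v →
        (G.Adj u v ↔
          Odd ((Finset.univ.filter (fun i : Fin d => u ∈ S i ∧ v ∈ S i)).card)) := by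
  obtain ⟨d, hd, S, hS⟩ :=
    G.exists_isComplementationSystem_of_support_subset univ (fun v _ => mem_univ v)
  exact ⟨d, by simpa using hd, S, hS⟩

/-- Any finite simple graph on `n ≥ 2` vertices has a subgraph
complementation system of size at most `n - 1`: a family of vertex subsets such
that an edge `{u,v}` is in `G` iff `{u,v}` is contained in an odd number of the
subsets. -/
theorem exists_subgraph_complementation_system (n : ℕ) (hn : 2 ≤ n)
    (G : SimpleGraph (Fin n)) :
    ∃ d : ℕ, d ≤ n - 1 ∧ ∃ S : Fin d → Finset (Fin n),
      ∀ u v : Fin n, u ≠ v →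
        (G.Adj u v ↔
          Odd ((Finset.univ.filter (fun i : Fin d => u ∈ S i ∧ v ∈ S i)).card)) :=
  exists_subgraph_complementation_system_general n G
end

section
/- For any graph G on n vertices, c₂(G) equals either mr(G, F₂) or mr(G, F₂) + 1, where mr(G, F₂) is the minimum, over all diagonal 0/1 matrices D, of the F₂-rank of A + D, with A the adjacency matrix of G over F₂. -/
open Matrix Module

namespace SCAux

variable {n : ℕ}

abbrev K := ZMod 2
abbrev V (n : ℕ) := Fin n → K

noncomputable abbrev outer (x : V n) : Matrix (Fin n) (Fin n) K := Matrix.vecMulVec x x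

lemma vecMulVec_mulVec (a b x : V n) :
    (Matrix.vecMulVec a b).mulVec x = (b ⬝ᵥ x) • a := by
  ext i
  simp only [Matrix.mulVec, Matrix.vecMulVec_apply, dotProduct, Pi.smul_apply,
    smul_eq_mul, Finset.sum_mul, Finset.mul_sum]
  refine Finset.sum_congr rfl fun j _ => by ring

lemma col_mem_range (M : Matrix (Fin n) (Fin n) K) (j : Fin n) :
    (fun i => M i j) ∈ LinearMap.range M.mulVecLin := by
  refine ⟨Pi.single j 1, ?_⟩
  ext i
  simp [Matrix.mulVecLin_apply]

lemma rank_le_of_range_le {M : Matrix (Fin n) (Fin n) K} {W : Submodule K (V n)}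
    (h : LinearMap.range M.mulVecLin ≤ W) : M.rank ≤ finrank K W :=
  Submodule.finrank_mono h

lemma outer_isSymm (x : V n) : (outer x).IsSymm :=
  Matrix.IsSymm.ext fun i j => by simp [Matrix.vecMulVec_apply, mul_comm]

lemma finrank_span_singleton_le (x : V n) : finrank K (K ∙ x) ≤ 1 := by
  by_cases hx : x = 0
  · subst hx
    rw [Submodule.span_zero_singleton]
    simp
  · rw [finrank_span_singleton hx]

lemma keyA : ∀ r : ℕ, ∀ M : Matrix (Fin n) (Fin n) K, M.IsSymm → M.rank ≤ r →
    (∃ u, M u u = 1) → ∃ x : Fin r → V n, M = ∑ i, outer (x i) := by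
  intro r
  induction r using Nat.strong_induction_on with
  | _ r IH =>
  rintro M hS hr ⟨u, hu⟩
  set c : V n := fun i => M i u with hc
  have hcu : c u = 1 := hu
  set M₁ := M + outer c with hM₁
  have hM₁S : M₁.IsSymm := hS.add (outer_isSymm c)
  have hrowu : ∀ m, M₁ u m = 0 := by
    intro m
    have h1 : M₁ u m = M u m + M u u * M m u := rfl
    rw [h1, hu, one_mul, hS.apply u m]
    have : ∀ a : K, a + a = 0 := by decide
    exact this _
  have hcmem : c ∈ LinearMap.range M.mulVecLin := col_mem_range M u
  have hrange1 : LinearMap.range M₁.mulVecLin ≤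
      (LinearMap.range M.mulVecLin) ⊓ (LinearMap.ker (LinearMap.proj (R := K) u)) := by
    rintro _ ⟨x, rfl⟩
    have hcol : M *ᵥ (Pi.single u 1 : V n) = c := by ext m; simp [hc]
    refine ⟨⟨x + (c ⬝ᵥ x) • (Pi.single u 1 : V n), ?_⟩, ?_⟩
    · simp only [Matrix.mulVecLin_apply, hM₁, Matrix.add_mulVec, Matrix.mulVec_add,
        Matrix.mulVec_smul, vecMulVec_mulVec, hcol]
    · simp only [SetLike.mem_coe, LinearMap.mem_ker, LinearMap.proj_apply, Matrix.mulVecLin_apply,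
        Matrix.mulVec, dotProduct]
      exact Finset.sum_eq_zero fun j _ => by rw [hrowu j, zero_mul]
  have hW : finrank K ((LinearMap.range M.mulVecLin) ⊓
      (LinearMap.ker (LinearMap.proj (R := K) u)) : Submodule K (V n)) < M.rank := by
    apply Submodule.finrank_lt_finrank_of_lt
    refine lt_of_le_of_ne inf_le_left fun hEq => ?_
    have hcin : c ∈ (LinearMap.range M.mulVecLin) ⊓
        (LinearMap.ker (LinearMap.proj (R := K) u)) := by rw [hEq]; exact hcmem
    have : c u = 0 := hcin.2
    rw [hcu] at this
    exact one_ne_zero this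
  have hM₁r : M₁.rank < r :=
    lt_of_le_of_lt (rank_le_of_range_le hrange1) (lt_of_lt_of_le hW hr)
  by_cases hdiag1 : ∃ w, M₁ w w = 1
  · obtain ⟨k, rfl⟩ : ∃ k, r = k + 1 := ⟨r - 1, by omega⟩
    obtain ⟨y, hy⟩ := IH k (by omega) M₁ hM₁S (by omega) hdiag1
    refine ⟨Fin.cons c y, ?_⟩
    rw [Fin.sum_univ_succ]
    simp only [Fin.cons_zero, Fin.cons_succ]
    rw [← hy, hM₁]
    ext a b
    simp only [Matrix.add_apply, Matrix.vecMulVec_apply]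
    generalize M a b = m
    generalize c a = A
    generalize c b = B
    revert m A B
    decide
  · push_neg at hdiag1
    have hdiag0 : ∀ w, M₁ w w = 0 := by
      have h01 : ∀ a : K, a ≠ 1 → a = 0 := by decide
      exact fun w => h01 _ (hdiag1 w)
    by_cases hM₁0 : M₁ = 0
    · obtain ⟨k, rfl⟩ : ∃ k, r = k + 1 := ⟨r - 1, by omega⟩
      refine ⟨Fin.cons c 0, ?_⟩
      rw [Fin.sum_univ_succ]
      simp only [Fin.cons_zero, Fin.cons_succ]
      have hz : ∀ i : Fin k, outer ((0 : Fin k → V n) i) = 0 := fun i => by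
        ext a b; simp [Matrix.vecMulVec_apply]
      rw [Finset.sum_congr rfl (fun i _ => hz i), Finset.sum_const_zero, add_zero]
      have := hM₁0
      rw [hM₁] at this
      ext a b
      have h1 : M a b + (outer c) a b = 0 := congrFun (congrFun this a) b
      have h2 : ∀ x y : K, x + y = 0 → x = y := by decide
      exact h2 _ _ h1
    · have hex : ∃ i j, M₁ i j = 1 := by
        by_contra h
        push_neg at h
        apply hM₁0
        ext i j
        have h01 : ∀ a : K, a ≠ 1 → a = 0 := by decide
        exact h01 _ (h i j)
      obtain ⟨i, j, hij⟩ := hex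
      set p : V n := fun m => M₁ m i with hp
      set q : V n := fun m => M₁ m j with hq
      have hpj : p j = 1 := by
        show M₁ j i = 1
        rw [hM₁S.apply i j]
        exact hij
      have hqi : q i = 1 := hij
      have hpi : p i = 0 := hdiag0 i
      have hqj : q j = 0 := hdiag0 j
      have hpu : p u = 0 := hrowu i
      have hqu : q u = 0 := hrowu j
      set M₂ := M₁ + (Matrix.vecMulVec p q + Matrix.vecMulVec q p) with hM₂
      have hrow_i : ∀ m, M₂ i m = 0 := by
        intro m
        have h1 : M₂ i m = M₁ i m + (p i * q m + q i * p m) := rfl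
        rw [h1, hpi, hqi, zero_mul, one_mul, zero_add]
        show M₁ i m + M₁ m i = 0
        rw [hM₁S.apply m i]
        have : ∀ a : K, a + a = 0 := by decide
        exact this _
      have hrow_j : ∀ m, M₂ j m = 0 := by
        intro m
        have h1 : M₂ j m = M₁ j m + (p j * q m + q j * p m) := rfl
        rw [h1, hpj, hqj, one_mul, zero_mul, add_zero]
        show M₁ j m + M₁ m j = 0
        rw [hM₁S.apply m j]
        have : ∀ a : K, a + a = 0 := by decide
        exact this _
      have hpmem : p ∈ LinearMap.range M₁.mulVecLin := col_mem_range M₁ i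
      have hqmem : q ∈ LinearMap.range M₁.mulVecLin := col_mem_range M₁ j
      set W1 := (LinearMap.range M₁.mulVecLin) ⊓ (LinearMap.ker (LinearMap.proj (R := K) i))
        with hW1def
      set W2 := W1 ⊓ (LinearMap.ker (LinearMap.proj (R := K) j)) with hW2def
      have hW1 : finrank K W1 < M₁.rank := by
        apply Submodule.finrank_lt_finrank_of_lt
        refine lt_of_le_of_ne inf_le_left fun hEq => ?_
        have hqin : q ∈ W1 := by rw [hEq]; exact hqmem
        have : q i = 0 := hqin.2
        rw [hqi] at this
        exact one_ne_zero this
      have hpW1 : p ∈ W1 := ⟨hpmem, hpi⟩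
      have hW2 : finrank K W2 < finrank K W1 := by
        apply Submodule.finrank_lt_finrank_of_lt
        refine lt_of_le_of_ne inf_le_left fun hEq => ?_
        have hpin : p ∈ W2 := by rw [hEq]; exact hpW1
        have : p j = 0 := hpin.2
        rw [hpj] at this
        exact one_ne_zero this
      have hrange2 : LinearMap.range M₂.mulVecLin ≤ W2 := by
        rintro _ ⟨x, rfl⟩
        have hcoli : M₁ *ᵥ (Pi.single i 1 : V n) = p := by ext m; simp [hp]
        have hcolj : M₁ *ᵥ (Pi.single j 1 : V n) = q := by ext m; simp [hq]
        refine ⟨⟨⟨x + (q ⬝ᵥ x) • (Pi.single i 1 : V n) + (p ⬝ᵥ x) • (Pi.single j 1 : V n), ?_⟩, ?_⟩, ?_⟩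
        · simp only [Matrix.mulVecLin_apply, hM₂, Matrix.add_mulVec, Matrix.mulVec_add,
            Matrix.mulVec_smul, vecMulVec_mulVec, hcoli, hcolj]
          abel
        · simp only [SetLike.mem_coe, LinearMap.mem_ker, LinearMap.proj_apply, Matrix.mulVecLin_apply,
            Matrix.mulVec, dotProduct]
          exact Finset.sum_eq_zero fun m _ => by rw [hrow_i m, zero_mul]
        · simp only [SetLike.mem_coe, LinearMap.mem_ker, LinearMap.proj_apply, Matrix.mulVecLin_apply,
            Matrix.mulVec, dotProduct]
          exact Finset.sum_eq_zero fun m _ => by rw [hrow_j m, zero_mul]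
      have hM₂r : M₂.rank ≤ finrank K W2 := rank_le_of_range_le hrange2
      set g₃ : V n := c + p + q with hg₃
      set N := M₂ + outer g₃ with hN
      have hNS : N.IsSymm := (hM₁S.add ((Matrix.IsSymm.ext fun a b => by
        simp only [Matrix.add_apply, Matrix.vecMulVec_apply]
        ring))).add (outer_isSymm g₃)
      have hNuu : N u u = 1 := by
        have h1 : N u u = M₂ u u + g₃ u * g₃ u := rfl
        have h2 : M₂ u u = M₁ u u + (p u * q u + q u * p u) := rfl
        have h3 : g₃ u = c u + p u + q u := rfl
        rw [h1, h2, h3, hdiag0 u, hpu, hqu, hcu]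
        norm_num
      have hNr : N.rank ≤ finrank K W2 + 1 := by
        have hrange3 : LinearMap.range N.mulVecLin ≤ W2 ⊔ (K ∙ g₃) := by
          rintro _ ⟨x, rfl⟩
          have h1 : N.mulVecLin x = M₂.mulVec x + (g₃ ⬝ᵥ x) • g₃ := by
            simp [Matrix.mulVecLin_apply, hN, Matrix.add_mulVec, vecMulVec_mulVec]
          rw [h1]
          exact Submodule.add_mem_sup (hrange2 ⟨x, rfl⟩)
            (Submodule.smul_mem _ _ (Submodule.mem_span_singleton_self g₃))
        calc N.rank ≤ finrank K (W2 ⊔ (K ∙ g₃) : Submodule K (V n)) :=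
              rank_le_of_range_le hrange3
          _ ≤ finrank K W2 + finrank K (K ∙ g₃) :=
              Submodule.finrank_add_le_finrank_add_finrank _ _
          _ ≤ finrank K W2 + 1 := by
              have := finrank_span_singleton_le (n := n) g₃
              omega
      obtain ⟨k, rfl⟩ : ∃ k, r = k + 2 := ⟨r - 2, by omega⟩
      obtain ⟨y, hy⟩ := IH k (by omega) N hNS (by omega) ⟨u, hNuu⟩
      refine ⟨Fin.cons (c + p) (Fin.cons (c + q) y), ?_⟩
      rw [Fin.sum_univ_succ, Fin.sum_univ_succ]
      simp only [Fin.cons_zero, Fin.cons_succ]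
      rw [← hy, hN, hM₂, hM₁]
      ext a b
      simp only [Matrix.add_apply, Matrix.vecMulVec_apply, hg₃, Pi.add_apply]
      generalize M a b = m
      generalize c a = A
      generalize c b = B
      generalize p a = P
      generalize p b = P'
      generalize q a = Q
      generalize q b = Q'
      revert m A B P P' Q Q'
      decide

end SCAux

namespace SCAux

lemma outer_zero : outer (0 : V n) = 0 := by
  ext a b; simp [Matrix.vecMulVec_apply]

lemma keyB (r : ℕ) (M : Matrix (Fin n) (Fin n) K) (hS : M.IsSymm) (hr : M.rank ≤ r)
    (hd : ∀ w, M w w = 0) : ∃ x : Fin (r + 1) → V n, M = ∑ i, outer (x i) := by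
  by_cases hM : M = 0
  · refine ⟨0, ?_⟩
    subst hM
    symm
    exact Finset.sum_eq_zero fun i _ => outer_zero
  · have hex : ∃ i j, M i j = 1 := by
      by_contra h
      push_neg at h
      apply hM
      ext i j
      have h01 : ∀ a : K, a ≠ 1 → a = 0 := by decide
      exact h01 _ (h i j)
    obtain ⟨i, j, hij⟩ := hex
    set p : V n := fun m => M m j with hp
    have hpi : p i = 1 := hij
    set N := M + outer p with hN
    have hNS : N.IsSymm := hS.add (outer_isSymm p)
    have hcolj : M *ᵥ (Pi.single j 1 : V n) = p := by ext m; simp [hp]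
    have hrangeN : LinearMap.range N.mulVecLin ≤ LinearMap.range M.mulVecLin := by
      rintro _ ⟨x, rfl⟩
      refine ⟨x + (p ⬝ᵥ x) • (Pi.single j 1 : V n), ?_⟩
      simp only [Matrix.mulVecLin_apply, hN, Matrix.add_mulVec, Matrix.mulVec_add,
        Matrix.mulVec_smul, vecMulVec_mulVec, hcolj]
    have hNr : N.rank ≤ r := le_trans (rank_le_of_range_le hrangeN) hr
    have hNii : N i i = 1 := by
      have h1 : N i i = M i i + p i * p i := rfl
      rw [h1, hd i, hpi, zero_add, one_mul]
    obtain ⟨y, hy⟩ := keyA r N hNS hNr ⟨i, hNii⟩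
    refine ⟨Fin.cons p y, ?_⟩
    rw [Fin.sum_univ_succ]
    simp only [Fin.cons_zero, Fin.cons_succ]
    rw [← hy, hN]
    ext a b
    simp only [Matrix.add_apply, Matrix.vecMulVec_apply]
    generalize M a b = m
    generalize p a = P
    generalize p b = P'
    revert m P P'
    decide

lemma pad {d d' : ℕ} (h : d ≤ d') {M : Matrix (Fin n) (Fin n) K} (x : Fin d → V n)
    (hM : M = ∑ i, outer (x i)) : ∃ y : Fin d' → V n, M = ∑ i, outer (y i) := by
  obtain ⟨k, rfl⟩ : ∃ k, d' = d + k := ⟨d' - d, by omega⟩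
  refine ⟨Fin.append x 0, ?_⟩
  rw [Fin.sum_univ_add]
  have h1 : ∀ i : Fin k, outer (Fin.append x (0 : Fin k → V n) (Fin.natAdd d i)) = 0 :=
    fun i => by rw [Fin.append_right]; exact outer_zero
  rw [Finset.sum_congr rfl fun i _ => h1 i, Finset.sum_const_zero, add_zero]
  simpa only [Fin.append_left] using hM

lemma odd_iff_cast (m : ℕ) : Odd m ↔ (m : K) = 1 := by
  rw [Nat.odd_iff, ← ZMod.natCast_mod m 2]
  rcases Nat.mod_two_eq_zero_or_one m with h | h <;> rw [h] <;> simp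

lemma card_eq_sum {d : ℕ} (x : Fin d → V n) (u v : Fin n) :
    (((Finset.univ : Finset (Fin d)).filter (fun i => x i u = 1 ∧ x i v = 1)).card : K)
      = ∑ i, x i u * x i v := by
  rw [Finset.card_filter]
  push_cast
  refine Finset.sum_congr rfl fun i _ => ?_
  have h : ∀ a b : K, (if (a = 1 ∧ b = 1) then (1 : K) else 0) = a * b := by decide
  exact h _ _

lemma sum_mulVec {d : ℕ} (f : Fin d → Matrix (Fin n) (Fin n) K) (y : V n) :
    (∑ i, f i) *ᵥ y = ∑ i, (f i) *ᵥ y := by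
  ext m
  simp only [Matrix.mulVec, dotProduct, Matrix.sum_apply, Finset.sum_apply,
    Finset.sum_mul]
  rw [Finset.sum_comm]

lemma rank_sum_outer_le {d : ℕ} (x : Fin d → V n) :
    (∑ i, outer (x i)).rank ≤ d := by
  classical
  have hrange : LinearMap.range (∑ i, outer (x i)).mulVecLin
      ≤ Submodule.span K (Set.range x) := by
    rintro _ ⟨y, rfl⟩
    rw [Matrix.mulVecLin_apply, sum_mulVec]
    refine Submodule.sum_mem _ fun i _ => ?_
    rw [vecMulVec_mulVec]
    exact Submodule.smul_mem _ _ (Submodule.subset_span ⟨i, rfl⟩)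
  refine le_trans (rank_le_of_range_le hrange) ?_
  refine le_trans (finrank_span_le_card (Set.range x)) ?_
  rw [Set.toFinset_range]
  exact le_trans (Finset.card_image_le) (by simp)

end SCAux


/-- The subgraph complementation number of `G`: the minimum number of vertex
subsets whose clique edge sets have symmetric difference equal to `E(G)`. -/
noncomputable def scNumber {n : ℕ} (G : SimpleGraph (Fin n)) : ℕ :=
  sInf {d : ℕ | ∃ S : Fin d → Finset (Fin n),
    ∀ u v : Fin n, u ≠ v →
      (G.Adj u v ↔
        Odd ((Finset.univ.filter (fun i : Fin d => u ∈ S i ∧ v ∈ S i)).card))}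

/-- The minimum rank of `G` over `F₂`: the minimum over binary diagonal matrices
`D` of the `F₂`-rank of `A + D`, with `A` the adjacency matrix of `G`. -/
noncomputable def minRankF2 {n : ℕ} (G : SimpleGraph (Fin n))
    [DecidableRel G.Adj] : ℕ :=
  sInf {r : ℕ | ∃ D : Fin n → ZMod 2,
    r = (Matrix.of (fun u v : Fin n => if G.Adj u v then (1 : ZMod 2) else 0)
          + Matrix.diagonal D).rank}

open SCAux in
/-- For any graph `G`, the subgraph complementation number equals
`mr(G, F₂)` or `mr(G, F₂) + 1`. -/
theorem scNumber_eq_minRank_or_succ {n : ℕ} (G : SimpleGraph (Fin n))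
    [DecidableRel G.Adj] :
    scNumber G = minRankF2 G ∨ scNumber G = minRankF2 G + 1 := by
  classical
  set A : Matrix (Fin n) (Fin n) K :=
    Matrix.of (fun u v : Fin n => if G.Adj u v then (1 : ZMod 2) else 0) with hA
  have hAapp : ∀ u v, A u v = if G.Adj u v then (1 : K) else 0 := fun u v => rfl
  have hAS : A.IsSymm := Matrix.IsSymm.ext fun u v => by
    simp only [hAapp]
    exact if_congr (G.adj_comm v u) rfl rfl
  set mr := minRankF2 G with hmrdef
  set sc := scNumber G with hscdef
  -- the defining sets
  have hmrSet : mr ∈ {r : ℕ | ∃ D : Fin n → ZMod 2, r = (A + Matrix.diagonal D).rank} := by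
    rw [hmrdef]
    exact Nat.sInf_mem ⟨(A + Matrix.diagonal 0).rank, 0, rfl⟩
  obtain ⟨D₀, hD₀⟩ := hmrSet
  set M := A + Matrix.diagonal D₀ with hM
  have hMS : M.IsSymm := hAS.add (Matrix.isSymm_diagonal D₀)
  have hMr : M.rank ≤ mr := le_of_eq hD₀.symm
  -- a decomposition with mr + 1 outer products
  have hdec : ∃ x : Fin (mr + 1) → V n, M = ∑ i, outer (x i) := by
    by_cases hdiag : ∃ w, M w w = 1
    · obtain ⟨x, hx⟩ := keyA mr M hMS hMr hdiag
      exact pad (Nat.le_succ mr) x hx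
    · push_neg at hdiag
      have hd0 : ∀ w, M w w = 0 := by
        have h01 : ∀ a : K, a ≠ 1 → a = 0 := by decide
        exact fun w => h01 _ (hdiag w)
      exact keyB mr M hMS hMr hd0
  obtain ⟨x, hx⟩ := hdec
  -- off-diagonal entries of M agree with A
  have hMoff : ∀ u v : Fin n, u ≠ v → M u v = if G.Adj u v then (1 : K) else 0 := by
    intro u v huv
    have : M u v = A u v + Matrix.diagonal D₀ u v := rfl
    rw [this, Matrix.diagonal_apply_ne _ huv, add_zero, hAapp]
  -- membership of mr + 1 in the scNumber set
  have hmem_sc : (mr + 1) ∈ {d : ℕ | ∃ S : Fin d → Finset (Fin n),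
      ∀ u v : Fin n, u ≠ v →
        (G.Adj u v ↔
          Odd ((Finset.univ.filter (fun i : Fin d => u ∈ S i ∧ v ∈ S i)).card))} := by
    refine ⟨fun i => Finset.univ.filter (fun u => x i u = 1), fun u v huv => ?_⟩
    have hfilter : (Finset.univ.filter (fun i : Fin (mr + 1) =>
        u ∈ Finset.univ.filter (fun w => x i w = 1) ∧
        v ∈ Finset.univ.filter (fun w => x i w = 1)))
        = Finset.univ.filter (fun i => x i u = 1 ∧ x i v = 1) := by
      refine Finset.filter_congr fun i _ => ?_
      simp [Finset.mem_filter]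
    rw [hfilter, odd_iff_cast, card_eq_sum]
    have hsum : ∑ i, x i u * x i v = M u v := by
      have := congrFun (congrFun hx u) v
      rw [this, Matrix.sum_apply]
      exact Finset.sum_congr rfl fun i _ => rfl
    rw [hsum, hMoff u v huv]
    by_cases hadj : G.Adj u v
    · rw [if_pos hadj]
      exact iff_of_true hadj rfl
    · rw [if_neg hadj]
      exact iff_of_false hadj (by decide)
  have hub : sc ≤ mr + 1 := Nat.sInf_le hmem_sc
  -- lower bound
  have hsc_mem : sc ∈ {d : ℕ | ∃ S : Fin d → Finset (Fin n),
      ∀ u v : Fin n, u ≠ v →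
        (G.Adj u v ↔
          Odd ((Finset.univ.filter (fun i : Fin d => u ∈ S i ∧ v ∈ S i)).card))} := by
    rw [hscdef]
    exact Nat.sInf_mem ⟨mr + 1, hmem_sc⟩
  obtain ⟨S, hS⟩ := hsc_mem
  set y : Fin sc → V n := fun i w => if w ∈ S i then 1 else 0 with hy
  set B := ∑ i, outer (y i) with hB
  have hBoff : ∀ u v : Fin n, u ≠ v → B u v = if G.Adj u v then (1 : K) else 0 := by
    intro u v huv
    have hfilter : (Finset.univ.filter (fun i : Fin sc => u ∈ S i ∧ v ∈ S i))
        = Finset.univ.filter (fun i => y i u = 1 ∧ y i v = 1) := by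
      refine Finset.filter_congr fun i _ => ?_
      have h1 : (u ∈ S i) ↔ y i u = 1 := by
        rw [hy]
        by_cases h : u ∈ S i <;> simp [h]
      have h2 : (v ∈ S i) ↔ y i v = 1 := by
        rw [hy]
        by_cases h : v ∈ S i <;> simp [h]
      simp [h1, h2]
    have hBuv : B u v = ∑ i, y i u * y i v := by
      rw [hB, Matrix.sum_apply]
      exact Finset.sum_congr rfl fun i _ => rfl
    have hcard := card_eq_sum y u v
    have hiff := hS u v huv
    rw [hfilter] at hiff
    rw [odd_iff_cast, hcard] at hiff
    by_cases hadj : G.Adj u v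
    · rw [hBuv, if_pos hadj, ← hiff.mp hadj]
    · rw [hBuv, if_neg hadj]
      have hne1 : ¬(∑ i, y i u * y i v = 1) := fun h => hadj (hiff.mpr h)
      have h01 : ∀ a : K, a ≠ 1 → a = 0 := by decide
      exact h01 _ hne1
  have hBA : B = A + Matrix.diagonal (fun w => B w w) := by
    ext u v
    by_cases huv : u = v
    · subst huv
      rw [Matrix.add_apply, Matrix.diagonal_apply_eq, hAapp]
      simp [G.irrefl]
    · rw [Matrix.add_apply, Matrix.diagonal_apply_ne _ huv, add_zero, hAapp,
        hBoff u v huv]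
  have hlb : mr ≤ sc := by
    have hmem : B.rank ∈ {r : ℕ | ∃ D : Fin n → ZMod 2,
        r = (A + Matrix.diagonal D).rank} := ⟨fun w => B w w, by rw [← hBA]⟩
    have h1 : mr ≤ B.rank := Nat.sInf_le hmem
    have h2 : B.rank ≤ sc := by
      rw [hB]
      exact rank_sum_outer_le y
    omega
  omega
end

section
/- For any graph G on n ≥ 1 vertices, c₂(G) is strictly greater than the average cut-rank E_ρ(G) = 2^{-n} Σ_{X ⊆ V(G)} ρ_G(X), provided G has at least one edge. -/
/-!
Fix a subgraph complementation system `S₁, …, S_d` of `G` with `d = c₂(G)`. For every cut `X`,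
the `X × (V ∖ X)` biadjacency matrix over `𝔽₂` is the sum of the `d` rank-one matrices
`𝟙_{Sₖ ∩ X} 𝟙_{Sₖ ∖ X}ᵀ`, so `ρ_G(X) ≤ d`. Since `ρ_G(∅) = 0` and `d ≥ 1` as soon as `G` has an
edge, the average of `ρ_G` is strictly below `d`.
-/

/-- The cut-rank of a vertex subset `X` in `G`: the rank over `F₂` of the
`X × (V ∖ X)` biadjacency matrix of `G`. -/
noncomputable def cutRank {V : Type*} [Fintype V] [DecidableEq V]
    (G : SimpleGraph V) [DecidableRel G.Adj] (X : Finset V) : ℕ :=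
  Matrix.rank (Matrix.of (fun (i : {x // x ∈ X}) (j : {y // y ∈ Xᶜ}) =>
    if G.Adj i.1 j.1 then (1 : ZMod 2) else 0))

namespace Matrix

variable {m n ι K : Type*} [Fintype n] [Field K]

theorem rank_add_le (A B : Matrix m n K) : (A + B).rank ≤ A.rank + B.rank := by
  rw [rank, rank, rank, mulVecLin_add]
  refine (Submodule.finrank_mono ?_).trans (Submodule.finrank_add_le_finrank_add_finrank _ _)
  rintro _ ⟨x, rfl⟩
  exact Submodule.add_mem_sup (LinearMap.mem_range_self _ x) (LinearMap.mem_range_self _ x)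

theorem rank_sum_le (s : Finset ι) (A : ι → Matrix m n K) :
    (∑ i ∈ s, A i).rank ≤ ∑ i ∈ s, (A i).rank := by
  induction s using Finset.cons_induction with
  | empty => simp [rank_zero]
  | cons i s hi ih =>
    rw [Finset.sum_cons, Finset.sum_cons]
    exact (rank_add_le _ _).trans (by gcongr)

end Matrix

namespace SimpleGraph

variable {V ι : Type*} [Fintype ι] [DecidableEq V] (G : SimpleGraph V)

/-- `S` is a subgraph complementation system of `G`: starting from the empty graph and
complementing the subgraphs induced by the `S i` in turn yields `G`. -/
def IsSubgraphComplementationSystem (S : ι → Finset V) : Prop :=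
  ∀ u v : V, u ≠ v → (G.Adj u v ↔ Odd (Finset.univ.filter (fun i => u ∈ S i ∧ v ∈ S i)).card)

variable {G}

theorem IsSubgraphComplementationSystem.comp_equiv {κ : Type*} [Fintype κ] {S : ι → Finset V}
    (hS : G.IsSubgraphComplementationSystem S) (e : κ ≃ ι) :
    G.IsSubgraphComplementationSystem (S ∘ e) := by
  intro u v huv
  rw [hS u v huv, ← Finset.card_map e.toEmbedding, Finset.map_filter]
  simp

theorem IsSubgraphComplementationSystem.card_pos {S : ι → Finset V}
    (hS : G.IsSubgraphComplementationSystem S) (hE : G.edgeSet.Nonempty) : 0 < Fintype.card ι := by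
  obtain ⟨e, he⟩ := hE
  induction e using Sym2.ind with
  | h u v =>
    have hodd := (hS u v (G.ne_of_adj he)).mp he
    rw [Fintype.card_pos_iff]
    obtain ⟨i, -⟩ := Finset.card_pos.mp hodd.pos
    exact ⟨i⟩

variable [Fintype V]

theorem isSubgraphComplementationSystem_edges (G : SimpleGraph V) [DecidableRel G.Adj] :
    G.IsSubgraphComplementationSystem fun e : G.edgeSet => (e : Sym2 V).toFinset := by
  intro u v huv
  have hfilter : Finset.univ.filter (fun e : G.edgeSet =>
      u ∈ (e : Sym2 V).toFinset ∧ v ∈ (e : Sym2 V).toFinset) =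
        Finset.univ.filter (fun e : G.edgeSet => (e : Sym2 V) = s(u, v)) := by
    ext e
    simp [Sym2.mem_toFinset, Sym2.mem_and_mem_iff huv]
  rw [hfilter]
  by_cases hadj : G.Adj u v
  · have hsingle : Finset.univ.filter (fun e : G.edgeSet => (e : Sym2 V) = s(u, v)) =
        {⟨s(u, v), hadj⟩} := by
      ext e
      simp [Subtype.ext_iff]
    simp [hadj, hsingle]
  · have hempty : Finset.univ.filter (fun e : G.edgeSet => (e : Sym2 V) = s(u, v)) = ∅ :=
      Finset.filter_false_of_mem fun e _ he => hadj (G.mem_edgeSet.mp (he ▸ e.2))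
    simp [hadj, hempty]

theorem exists_isSubgraphComplementationSystem_fin (G : SimpleGraph V) [DecidableRel G.Adj] :
    ∃ d, ∃ S : Fin d → Finset V, G.IsSubgraphComplementationSystem S :=
  ⟨_, _, (isSubgraphComplementationSystem_edges G).comp_equiv (Fintype.equivFin _).symm⟩

variable [DecidableRel G.Adj]

theorem IsSubgraphComplementationSystem.cutRank_le_card {S : ι → Finset V}
    (hS : G.IsSubgraphComplementationSystem S) (X : Finset V) : cutRank G X ≤ Fintype.card ι := by
  set indicator : (k : ι) → (Y : Finset V) → Y → ZMod 2 := fun k _ x => if x.1 ∈ S k then 1 else 0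
  have hsum : Matrix.of (fun (i : {x // x ∈ X}) (j : {y // y ∈ Xᶜ}) =>
      if G.Adj i.1 j.1 then (1 : ZMod 2) else 0) =
      ∑ k, Matrix.vecMulVec (indicator k X) (indicator k Xᶜ) := by
    ext i j
    have hij : i.1 ≠ j.1 := fun h => Finset.mem_compl.mp j.2 (h ▸ i.2)
    simp only [Matrix.of_apply, Matrix.sum_apply, Matrix.vecMulVec_apply, indicator,
      ite_zero_mul_ite_zero, one_mul, Finset.sum_boole, hS i j hij]
    split_ifs with hodd
    · exact (ZMod.natCast_eq_one_iff_odd.mpr hodd).symm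
    · exact (ZMod.natCast_eq_zero_iff_even.mpr (Nat.not_odd_iff_even.mp hodd)).symm
  calc cutRank G X = (∑ k, Matrix.vecMulVec (indicator k X) (indicator k Xᶜ)).rank := by
        rw [cutRank, hsum]
    _ ≤ ∑ k, (Matrix.vecMulVec (indicator k X) (indicator k Xᶜ)).rank := Matrix.rank_sum_le _ _
    _ ≤ ∑ _k : ι, 1 := Finset.sum_le_sum fun k _ => Matrix.rank_vecMulVec_le _ _
    _ = Fintype.card ι := by simp

theorem cutRank_empty : cutRank G ∅ = 0 :=
  Nat.le_zero.mp ((Matrix.rank_le_card_height _).trans_eq (by simp))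

theorem IsSubgraphComplementationSystem.average_cutRank_lt {S : ι → Finset V}
    (hS : G.IsSubgraphComplementationSystem S) (hE : G.edgeSet.Nonempty) :
    (∑ X : Finset V, (cutRank G X : ℝ)) / 2 ^ Fintype.card V < Fintype.card ι := by
  rw [div_lt_iff₀ (by positivity)]
  calc ∑ X, (cutRank G X : ℝ) < ∑ _X : Finset V, (Fintype.card ι : ℝ) :=
        Finset.sum_lt_sum (fun X _ => mod_cast hS.cutRank_le_card X)
          ⟨∅, Finset.mem_univ _, by simpa [cutRank_empty] using hS.card_pos hE⟩
    _ = Fintype.card ι * 2 ^ Fintype.card V := by simp [Fintype.card_finset, mul_comm]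

end SimpleGraph

theorem scNumber_gt_average_cutRank_general {V : Type*} [Fintype V] [DecidableEq V]
    (G : SimpleGraph V) [DecidableRel G.Adj]
    (hE : G.edgeSet.Nonempty) :
    ((sInf {d : ℕ | ∃ S : Fin d → Finset V,
      ∀ u v : V, u ≠ v →
        (G.Adj u v ↔
          Odd ((Finset.univ.filter (fun i : Fin d => u ∈ S i ∧ v ∈ S i)).card))} : ℕ) : ℝ)
      > (∑ X : Finset V, (cutRank G X : ℝ)) / 2 ^ (Fintype.card V) := by
  obtain ⟨S, hS⟩ : sInf {d : ℕ | ∃ S : Fin d → Finset V, G.IsSubgraphComplementationSystem S} ∈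
      {d : ℕ | ∃ S : Fin d → Finset V, G.IsSubgraphComplementationSystem S} :=
    Nat.sInf_mem G.exists_isSubgraphComplementationSystem_fin
  have h := hS.average_cutRank_lt hE
  rwa [Fintype.card_fin] at h

/-- For any graph `G` on `n ≥ 1` vertices with at least one edge,
the subgraph complementation number `c₂(G)` is strictly greater than the average
cut-rank `E_ρ(G) = 2^{-n} Σ_{X ⊆ V} ρ_G(X)`. -/
theorem scNumber_gt_average_cutRank {V : Type*} [Fintype V] [DecidableEq V]
    (G : SimpleGraph V) [DecidableRel G.Adj]
    (hn : 1 ≤ Fintype.card V) (hE : G.edgeSet.Nonempty) :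
    ((sInf {d : ℕ | ∃ S : Fin d → Finset V,
      ∀ u v : V, u ≠ v →
        (G.Adj u v ↔
          Odd ((Finset.univ.filter (fun i : Fin d => u ∈ S i ∧ v ∈ S i)).card))} : ℕ) : ℝ)
      > (∑ X : Finset V, (cutRank G X : ℝ)) / 2 ^ (Fintype.card V) :=
  scNumber_gt_average_cutRank_general G hE
end
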